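/- Let F be a field and let I be an infinite set. Then every F-algebra automorphism φ of M_∞(I,F) is a conjugation by an element of GL_rcf(I,F): there exists an invertible element x ∈ M_rcf(I,F) such that φ(a) = x⁻¹ a x for all a ∈ M_∞(I,F). -/

import Mathlib

/-!
The images `e i j = φ (E i j)` of the matrix units again satisfy `e i j * e k l = δ j k • e i l`.
Surjectivity gives `e o o * M_∞ * e o o = F • e o o`, so the corner `e o o` has rank one, and then
`e i j = (column of e i o) * (row of e o j)` up to a scalar: `e i j m n = y m i * x j n`. Thus `φ`
agrees on matrix units, hence everywhere, with the linear map `a ↦ y a x`, and `x y = 1` by the unit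
relations. Finally each finitary `c` is `y b x` with `b` finitary, so `x c = b x` and `c y = y b`;
taking `c = E n n` yields `y x = 1` and the missing column (row) finiteness of `x` (`y`).
-/

/-- The product of two `I × I` matrices, defined via `finsum`; it is well defined
whenever one factor is finitary or both are row-and-column-finite. -/
noncomputable def matMul {F I : Type*} [Field F] (a b : Matrix I I F) : Matrix I I F :=
  fun i j => ∑ᶠ k, a i k * b k j

def IsFinitary {F I : Type*} [Field F] (a : Matrix I I F) : Prop :=
  {p : I × I | a p.1 p.2 ≠ 0}.Finite

def IsRcf {F I : Type*} [Field F] (a : Matrix I I F) : Prop :=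
  (∀ i, {j | a i j ≠ 0}.Finite) ∧ (∀ j, {i | a i j ≠ 0}.Finite)

open Matrix Function

theorem finsum_comm_of_hasFiniteSupport {α β M : Type*} [AddCommMonoid M] (f : α → β → M)
    (hf : HasFiniteSupport fun u : α × β => f u.1 u.2) :
    ∑ᶠ a, ∑ᶠ b, f a b = ∑ᶠ b, ∑ᶠ a, f a b := by
  rw [← finsum_curry _ hf, ← finsum_comp_equiv (Equiv.prodComm β α)]
  exact finsum_curry (fun v : β × α => f v.2 v.1)
    (hf.fun_comp_of_injective (Equiv.prodComm β α).injective)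

section MatrixAlgebra

variable {F I : Type*} [Field F]

section Finitary

variable {a b : Matrix I I F}

theorem IsFinitary.rows_finite (ha : IsFinitary a) : {j | ∃ l, a j l ≠ 0}.Finite :=
  (ha.image Prod.fst).subset fun j ⟨l, hl⟩ => ⟨(j, l), hl, rfl⟩

theorem IsFinitary.cols_finite (ha : IsFinitary a) : {l | ∃ j, a j l ≠ 0}.Finite :=
  (ha.image Prod.snd).subset fun l ⟨j, hj⟩ => ⟨(j, l), hj, rfl⟩

theorem IsFinitary.row_finite (ha : IsFinitary a) (m : I) : {k | a m k ≠ 0}.Finite :=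
  ha.cols_finite.subset fun _ hk => ⟨m, hk⟩

theorem IsFinitary.col_finite (ha : IsFinitary a) (n : I) : {k | a k n ≠ 0}.Finite :=
  ha.rows_finite.subset fun _ hk => ⟨n, hk⟩

theorem isFinitary_zero : IsFinitary (0 : Matrix I I F) := by
  simp [IsFinitary]

theorem IsFinitary.add (ha : IsFinitary a) (hb : IsFinitary b) : IsFinitary (a + b) :=
  (ha.union hb).subset fun u hu => by
    by_contra h
    simp_all [not_or]

theorem isFinitary_sum {ι : Type*} (s : Finset ι) {g : ι → Matrix I I F}
    (hg : ∀ i ∈ s, IsFinitary (g i)) : IsFinitary (∑ i ∈ s, g i) := by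
  classical
  induction s using Finset.induction with
  | empty => simpa using isFinitary_zero
  | insert i s hi ih =>
    rw [Finset.sum_insert hi]
    exact (hg i (s.mem_insert_self i)).add (ih fun j hj => hg j (Finset.mem_insert_of_mem hj))

variable [DecidableEq I]

theorem isFinitary_single (i j : I) (c : F) : IsFinitary (single i j c) :=
  (Set.finite_singleton (i, j)).subset fun u hu => by
    by_contra h
    exact hu (single_apply_of_ne _ _ _ _ _ fun ⟨hi, hj⟩ => h (by simp [hi, hj]))

theorem IsFinitary.eq_sum_single (ha : IsFinitary a) :
    a = ∑ u ∈ ha.toFinset, single u.1 u.2 (a u.1 u.2) := by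
  ext m n
  rw [Matrix.sum_apply, Finset.sum_eq_single (m, n)]
  · simp
  · rintro ⟨i, j⟩ - hne
    exact single_apply_of_ne _ _ _ _ _ fun ⟨hi, hj⟩ => hne (by simp_all)
  · intro hmn
    simpa using ha.mem_toFinset.not.mp hmn

end Finitary

section MatMul

variable {a b c : Matrix I I F}

theorem matMul_apply (a b : Matrix I I F) (m n : I) : matMul a b m n = ∑ᶠ k, a m k * b k n := rfl

theorem exists_ne_zero_left_of_matMul_ne_zero {m n : I} (h : matMul a b m n ≠ 0) :
    ∃ k, a m k ≠ 0 := by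
  by_contra! h'
  exact h (finsum_eq_zero_of_forall_eq_zero fun k => by rw [h' k, zero_mul])

theorem exists_ne_zero_right_of_matMul_ne_zero {m n : I} (h : matMul a b m n ≠ 0) :
    ∃ k, b k n ≠ 0 := by
  by_contra! h'
  exact h (finsum_eq_zero_of_forall_eq_zero fun k => by rw [h' k, mul_zero])

theorem IsFinitary.matMul (ha : IsFinitary a) (hb : IsFinitary b) : IsFinitary (matMul a b) :=
  (ha.rows_finite.prod hb.cols_finite).subset fun _ hu =>
    ⟨exists_ne_zero_left_of_matMul_ne_zero hu, exists_ne_zero_right_of_matMul_ne_zero hu⟩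

theorem matMul_add (a : Matrix I I F) (hb : ∀ n, {k | b k n ≠ 0}.Finite)
    (hc : ∀ n, {k | c k n ≠ 0}.Finite) : matMul a (b + c) = matMul a b + matMul a c := by
  ext m n
  simp only [matMul_apply, Matrix.add_apply, mul_add]
  exact finsum_add_distrib ((hb n).subset fun _ hk => right_ne_zero_of_mul hk)
    ((hc n).subset fun _ hk => right_ne_zero_of_mul hk)

theorem add_matMul (ha : ∀ m, {k | a m k ≠ 0}.Finite) (hb : ∀ m, {k | b m k ≠ 0}.Finite)
    (c : Matrix I I F) : matMul (a + b) c = matMul a c + matMul b c := by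
  ext m n
  simp only [matMul_apply, Matrix.add_apply, add_mul]
  exact finsum_add_distrib ((ha m).subset fun _ hk => left_ne_zero_of_mul hk)
    ((hb m).subset fun _ hk => left_ne_zero_of_mul hk)

theorem matMul_smul (a : Matrix I I F) (r : F) (b : Matrix I I F) :
    matMul a (r • b) = r • matMul a b := by
  ext m n
  simp only [matMul_apply, Matrix.smul_apply, smul_eq_mul, mul_finsum, mul_left_comm]

theorem smul_matMul (r : F) (a b : Matrix I I F) : matMul (r • a) b = r • matMul a b := by
  ext m n
  simp only [matMul_apply, Matrix.smul_apply, smul_eq_mul, mul_finsum, mul_assoc]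

theorem matMul_assoc_of_finite
    (h : ∀ m n, HasFiniteSupport fun u : I × I => a m u.1 * (b u.1 u.2 * c u.2 n)) :
    matMul (matMul a b) c = matMul a (matMul b c) := by
  ext m n
  simp only [matMul_apply, finsum_mul, mul_finsum, mul_assoc]
  exact (finsum_comm_of_hasFiniteSupport _ (h m n)).symm

theorem matMul_assoc_of_isFinitary (a : Matrix I I F) (hb : IsFinitary b) (c : Matrix I I F) :
    matMul (matMul a b) c = matMul a (matMul b c) :=
  matMul_assoc_of_finite fun _ _ =>
    hb.subset fun _ hu => left_ne_zero_of_mul (right_ne_zero_of_mul hu)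

theorem matMul_assoc_of_finite_rows (ha : ∀ m, {k | a m k ≠ 0}.Finite) (b : Matrix I I F)
    (hc : {j | ∃ l, c j l ≠ 0}.Finite) :
    matMul (matMul a b) c = matMul a (matMul b c) :=
  matMul_assoc_of_finite fun m n => ((ha m).prod hc).subset fun _ hu =>
    ⟨left_ne_zero_of_mul hu, ⟨n, right_ne_zero_of_mul (right_ne_zero_of_mul hu)⟩⟩

theorem matMul_assoc_of_finite_cols (ha : {l | ∃ j, a j l ≠ 0}.Finite) (b : Matrix I I F)
    (hc : ∀ n, {k | c k n ≠ 0}.Finite) :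
    matMul (matMul a b) c = matMul a (matMul b c) :=
  matMul_assoc_of_finite fun m n => (ha.prod (hc n)).subset fun _ hu =>
    ⟨⟨m, left_ne_zero_of_mul hu⟩, right_ne_zero_of_mul (right_ne_zero_of_mul hu)⟩

/-- With `f p q ≠ 0` this says `f = (f p q)⁻¹ • (column q of f) * (row p of f)`. -/
def IsRankOneAt (f : Matrix I I F) (p q : I) : Prop :=
  ∀ m n, f m q * f p n = f p q * f m n

theorem IsRankOneAt.apply_mul_eq_of_matMul_eq {f b : Matrix I I F} {p q : I}
    (hf : IsRankOneAt f p q) (hb : matMul b f = b) (m t : I) :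
    b m t * f p q = b m q * f p t := by
  calc b m t * f p q = (∑ᶠ s, b m s * f s t) * f p q := by rw [← matMul_apply, hb]
    _ = (∑ᶠ s, b m s * f s q) * f p t := by
      simp only [finsum_mul, mul_assoc, mul_comm (f _ t) (f p q), ← hf _ t]
    _ = b m q * f p t := by rw [← matMul_apply, hb]

variable [DecidableEq I]

theorem one_matMul (a : Matrix I I F) : matMul 1 a = a := by
  ext m n
  rw [matMul_apply, finsum_eq_single _ m fun k hk => by simp [one_apply_ne' hk]]
  simp

theorem matMul_one (a : Matrix I I F) : matMul a 1 = a := by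
  ext m n
  rw [matMul_apply, finsum_eq_single _ n fun k hk => by simp [one_apply_ne hk]]
  simp

theorem matMul_single_apply (a : Matrix I I F) (k l : I) (c : F) (m n : I) :
    matMul a (single k l c) m n = if l = n then a m k * c else 0 := by
  rw [matMul_apply, finsum_eq_single _ k fun t ht => by simp [Ne.symm ht]]
  by_cases h : l = n <;> simp [h]

theorem single_matMul_apply (k l : I) (c : F) (a : Matrix I I F) (m n : I) :
    matMul (single k l c) a m n = if k = m then c * a l n else 0 := by
  rw [matMul_apply, finsum_eq_single _ l fun t ht => by simp [Ne.symm ht]]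
  by_cases h : k = m <;> simp [h]

theorem single_matMul_single (i j k l : I) (c d : F) :
    matMul (single i j c) (single k l d) = if j = k then single i l (c * d) else 0 := by
  ext m n
  rw [matMul_single_apply]
  split_ifs <;> simp_all [single_apply]

theorem matMul_single_matMul_apply (a b : Matrix I I F) (k l m n : I) :
    matMul (matMul a (single k l 1)) b m n = a m k * b l n := by
  rw [matMul_apply, finsum_eq_single _ l fun t ht => by simp [matMul_single_apply, Ne.symm ht]]
  simp [matMul_single_apply]

end MatMul

structure IsFinitaryLinear (φ : Matrix I I F → Matrix I I F) : Prop where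
  map_add : ∀ a b, IsFinitary a → IsFinitary b → φ (a + b) = φ a + φ b
  map_smul : ∀ (c : F) (a), IsFinitary a → φ (c • a) = c • φ a

namespace IsFinitaryLinear

variable {φ ψ : Matrix I I F → Matrix I I F}

theorem map_zero (hφ : IsFinitaryLinear φ) : φ 0 = 0 := by
  simpa using hφ.map_smul 0 0 isFinitary_zero

theorem map_sum (hφ : IsFinitaryLinear φ) {ι : Type*} (s : Finset ι) {g : ι → Matrix I I F}
    (hg : ∀ i ∈ s, IsFinitary (g i)) : φ (∑ i ∈ s, g i) = ∑ i ∈ s, φ (g i) := by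
  classical
  induction s using Finset.induction with
  | empty => simpa using hφ.map_zero
  | insert i s hi ih =>
    have hs : ∀ j ∈ s, IsFinitary (g j) := fun j hj => hg j (Finset.mem_insert_of_mem hj)
    rw [Finset.sum_insert hi, Finset.sum_insert hi,
      hφ.map_add _ _ (hg i (s.mem_insert_self i)) (isFinitary_sum s hs), ih hs]

theorem eqOn_of_single [DecidableEq I] (hφ : IsFinitaryLinear φ) (hψ : IsFinitaryLinear ψ)
    (h : ∀ i j, φ (single i j 1) = ψ (single i j 1)) : Set.EqOn φ ψ {a | IsFinitary a} := by
  intro a ha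
  have hsingle : ∀ u ∈ ha.toFinset, IsFinitary (single u.1 u.2 (a u.1 u.2)) :=
    fun u _ => isFinitary_single _ _ _
  have hsmul_single (χ : Matrix I I F → Matrix I I F) (hχ : IsFinitaryLinear χ) (i j : I)
      (c : F) : χ (single i j c) = c • χ (single i j 1) := by
    rw [← hχ.map_smul _ _ (isFinitary_single i j 1), smul_single, smul_eq_mul, mul_one]
  rw [ha.eq_sum_single, hφ.map_sum _ hsingle, hψ.map_sum _ hsingle]
  refine Finset.sum_congr rfl fun u _ => ?_
  rw [hsmul_single φ hφ, hsmul_single ψ hψ, h]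

end IsFinitaryLinear

theorem isFinitaryLinear_conj (y x : Matrix I I F) :
    IsFinitaryLinear fun a => matMul (matMul y a) x where
  map_add a b ha hb := by
    rw [matMul_add y ha.col_finite hb.col_finite, add_matMul _ _ x]
    · exact fun _ => ha.cols_finite.subset fun _ hk => exists_ne_zero_right_of_matMul_ne_zero hk
    · exact fun _ => hb.cols_finite.subset fun _ hk => exists_ne_zero_right_of_matMul_ne_zero hk
  map_smul c a _ := by rw [matMul_smul, smul_matMul]

section Conjugation

variable [DecidableEq I] {x y b : Matrix I I F}

theorem matMul_conj_of_matMul_eq_one (hxy : matMul x y = 1) (hx : ∀ i, {k | x i k ≠ 0}.Finite)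
    (hb : IsFinitary b) : matMul x (matMul (matMul y b) x) = matMul b x := by
  rw [matMul_assoc_of_isFinitary y hb x, ← matMul_assoc_of_finite_rows hx y, hxy, one_matMul]
  exact hb.rows_finite.subset fun _ ⟨_, hl⟩ => exists_ne_zero_left_of_matMul_ne_zero hl

theorem conj_matMul_of_matMul_eq_one (hxy : matMul x y = 1) (hy : ∀ j, {k | y k j ≠ 0}.Finite)
    (hb : IsFinitary b) : matMul (matMul (matMul y b) x) y = matMul y b := by
  rw [matMul_assoc_of_finite_cols _ x hy, hxy, matMul_one]
  exact hb.cols_finite.subset fun _ ⟨_, hj⟩ => exists_ne_zero_right_of_matMul_ne_zero hj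

theorem matMul_eq_one_and_isRcf_of_conj_surjective (hxy : matMul x y = 1)
    (hx : ∀ i, {k | x i k ≠ 0}.Finite) (hy : ∀ j, {k | y k j ≠ 0}.Finite)
    (hsurj : ∀ c, IsFinitary c → ∃ b, IsFinitary b ∧ matMul (matMul y b) x = c) :
    matMul y x = 1 ∧ IsRcf x ∧ IsRcf y := by
  choose b hb hbc using fun n : I => hsurj (single n n 1) (isFinitary_single n n 1)
  have hxb : ∀ n i, x i n = matMul (b n) x i n := fun n i => by
    rw [← matMul_conj_of_matMul_eq_one hxy hx (hb n), hbc, matMul_single_apply, if_pos rfl,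
      mul_one]
  have hby : ∀ m j, y m j = matMul y (b m) m j := fun m j => by
    rw [← conj_matMul_of_matMul_eq_one hxy hy (hb m), hbc, single_matMul_apply, if_pos rfl,
      one_mul]
  refine ⟨?_, ⟨hx, fun n => ?_⟩, ⟨fun m => ?_, hy⟩⟩
  · ext m n
    calc matMul y x m n = matMul y (matMul (b n) x) m n := finsum_congr fun k => by rw [← hxb]
      _ = (1 : Matrix I I F) m n := by
        rw [← matMul_assoc_of_isFinitary y (hb n) x, hbc]
        simp [single_apply, one_apply, eq_comm]
  · exact (hb n).rows_finite.subset fun i (hi : x i n ≠ 0) =>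
      exists_ne_zero_left_of_matMul_ne_zero (hxb n i ▸ hi)
  · exact (hb m).cols_finite.subset fun j (hj : y m j ≠ 0) =>
      exists_ne_zero_right_of_matMul_ne_zero (hby m j ▸ hj)

end Conjugation

section MatrixUnits

variable [DecidableEq I]

def IsMatrixUnits (e : I → I → Matrix I I F) : Prop :=
  ∀ i j k l, matMul (e i j) (e k l) = if j = k then e i l else 0

theorem isRankOneAt_of_matMul_single_matMul {f : Matrix I I F} {p q : I} {d : F}
    (hf : matMul (matMul f (single q p 1)) f = d • f) (hpq : f p q ≠ 0) : IsRankOneAt f p q := by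
  have hentry : ∀ m n, f m q * f p n = d * f m n := fun m n => by
    rw [← matMul_single_matMul_apply, hf, Matrix.smul_apply, smul_eq_mul]
  intro m n
  rw [hentry, mul_right_cancel₀ hpq (hentry p q).symm]

namespace IsMatrixUnits

variable {e : I → I → Matrix I I F}

theorem apply_mul_corner (he : IsMatrixUnits e) {o p q : I} (hrank : IsRankOneAt (e o o) p q)
    (i j m n : I) : e i j m n * e o o p q = e i o m q * e o j p n := by
  have hleft : ∀ t, e i o m t * e o o p q = e i o m q * e o o p t :=
    hrank.apply_mul_eq_of_matMul_eq (by simpa using he i o o o) m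
  calc e i j m n * e o o p q = (∑ᶠ t, e i o m t * e o j t n) * e o o p q := by
        rw [← matMul_apply, he, if_pos rfl]
    _ = e i o m q * ∑ᶠ t, e o o p t * e o j t n := by
        simp only [finsum_mul, mul_finsum, mul_right_comm _ (e o j _ n), hleft, mul_assoc]
    _ = e i o m q * e o j p n := by rw [← matMul_apply, he, if_pos rfl]

theorem exists_factorization (he : IsMatrixUnits e) (hfin : ∀ i j, IsFinitary (e i j))
    {o p q : I} (hpq : e o o p q ≠ 0) (hrank : IsRankOneAt (e o o) p q) :
    ∃ x y : Matrix I I F, (∀ i, {k | x i k ≠ 0}.Finite) ∧ (∀ j, {k | y k j ≠ 0}.Finite) ∧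
      matMul x y = 1 ∧ ∀ i j m n, e i j m n = y m i * x j n := by
  refine ⟨fun i k => (e o o p q)⁻¹ * e o i p k, fun k j => e j o k q,
    fun i => ((hfin o i).row_finite p).subset fun _ hk => right_ne_zero_of_mul hk,
    fun j => (hfin j o).col_finite q, ?_, fun i j m n => ?_⟩
  · ext i j
    change ∑ᶠ k, (e o o p q)⁻¹ * e o i p k * e j o k q = _
    simp only [mul_assoc, ← mul_finsum]
    rw [← matMul_apply, he, one_apply]
    split_ifs <;> simp [hpq]
  · rw [mul_left_comm, ← he.apply_mul_corner hrank, mul_comm, mul_inv_cancel_right₀ hpq]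

end IsMatrixUnits

end MatrixUnits

section Automorphism

variable [DecidableEq I] {φ : Matrix I I F → Matrix I I F}

theorem isMatrixUnits_map_single (hφ0 : φ 0 = 0)
    (hmul : ∀ a b, IsFinitary a → IsFinitary b → φ (matMul a b) = matMul (φ a) (φ b)) :
    IsMatrixUnits fun i j => φ (single i j (1 : F)) := by
  intro i j k l
  rw [← hmul _ _ (isFinitary_single i j 1) (isFinitary_single k l 1), single_matMul_single,
    mul_one, apply_ite φ, hφ0]

theorem exists_map_single_apply_ne_zero (hinj : Set.InjOn φ {a | IsFinitary a}) (hφ0 : φ 0 = 0)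
    (i j : I) : ∃ p q, φ (single i j (1 : F)) p q ≠ 0 := by
  by_contra! h
  have h0 : φ (single i j 1) = φ 0 := by rw [hφ0]; exact Matrix.ext h
  simpa using congrFun₂ (hinj (isFinitary_single i j 1) isFinitary_zero h0) i j

theorem isRankOneAt_map_single (hsurj : Set.SurjOn φ {a | IsFinitary a} {a | IsFinitary a})
    (hsmul : ∀ (c : F) (a), IsFinitary a → φ (c • a) = c • φ a)
    (hmul : ∀ a b, IsFinitary a → IsFinitary b → φ (matMul a b) = matMul (φ a) (φ b))
    {o p q : I} (hpq : φ (single o o 1) p q ≠ 0) : IsRankOneAt (φ (single o o 1)) p q := by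
  have ho := isFinitary_single o o (1 : F)
  obtain ⟨d, hd, hφd⟩ := hsurj (isFinitary_single q p (1 : F))
  have hcorner : matMul (matMul (single o o 1) d) (single o o 1) = d o o • single o o (1 : F) := by
    ext m n
    rw [matMul_single_apply, single_matMul_apply]
    by_cases hm : o = m <;> by_cases hn : o = n <;> simp [single_apply, hm, hn]
  refine isRankOneAt_of_matMul_single_matMul (d := d o o) ?_ hpq
  rw [← hφd, ← hmul _ _ ho hd, ← hmul _ _ (ho.matMul hd) ho, hcorner, hsmul _ _ ho]

end Automorphism

end MatrixAlgebra

/-- Every `F`-algebra automorphism `φ` of `M_∞(I,F)` is conjugation by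
an invertible element `x` of `M_rcf(I,F)`: `φ(a) = x⁻¹ * a * x` for all finitary `a`. -/
theorem stmt_14 (F I : Type*) [Field F] [Infinite I] [DecidableEq I]
    (φ : Matrix I I F → Matrix I I F)
    (hbij : Set.BijOn φ {a : Matrix I I F | IsFinitary a} {a : Matrix I I F | IsFinitary a})
    (hadd : ∀ a b, IsFinitary a → IsFinitary b → φ (a + b) = φ a + φ b)
    (hsmul : ∀ (c : F) (a), IsFinitary a → φ (c • a) = c • φ a)
    (hmul : ∀ a b, IsFinitary a → IsFinitary b → φ (matMul a b) = matMul (φ a) (φ b)) :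
    ∃ x xinv : Matrix I I F, IsRcf x ∧ IsRcf xinv ∧
      matMul x xinv = 1 ∧ matMul xinv x = 1 ∧
      ∀ a, IsFinitary a → φ a = matMul (matMul xinv a) x := by
  obtain ⟨o⟩ : Nonempty I := inferInstance
  have hlin : IsFinitaryLinear φ := ⟨hadd, hsmul⟩
  have he : IsMatrixUnits fun i j => φ (single i j 1) := isMatrixUnits_map_single hlin.map_zero hmul
  obtain ⟨p, q, hpq⟩ := exists_map_single_apply_ne_zero hbij.injOn hlin.map_zero o o
  obtain ⟨x, y, hxrow, hycol, hxy, hfactor⟩ :=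
    he.exists_factorization (fun i j => hbij.mapsTo (isFinitary_single i j 1)) hpq
      (isRankOneAt_map_single hbij.surjOn hsmul hmul hpq)
  have hconj : ∀ a, IsFinitary a → φ a = matMul (matMul y a) x := by
    refine hlin.eqOn_of_single (isFinitaryLinear_conj y x) fun i j => ?_
    ext m n
    rw [matMul_single_matMul_apply]
    exact hfactor i j m n
  obtain ⟨hyx, hxrcf, hyrcf⟩ := matMul_eq_one_and_isRcf_of_conj_surjective hxy hxrow hycol
    fun c hc => by
      obtain ⟨b, hb, rfl⟩ := hbij.surjOn hc
      exact ⟨b, hb, (hconj b hb).symm⟩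
  exact ⟨x, y, hxrcf, hyrcf, hxy, hyx, hconj⟩
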